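/- arXiv:2504.03432 — 7 statements merged into one kernel-verified Lean document; each statement's English description precedes it below -/
import Mathlib

section
/- Let f : X → ℝ be differentiable and λ-quasar-convex with respect to a global minimizer x ∈ X, i.e., f(x) ≥ f(x') + (1/λ)⟨∇f(x'), x - x'⟩ for all x' ∈ X, with λ ∈ (0,1]. Then x is a Minty VI solution for F := ∇f, i.e., ⟨∇f(x'), x' - x⟩ ≥ 0 for all x' ∈ X. Furthermore, any ε-SVI solution x' (satisfying ⟨∇f(x'), y - x'⟩ ≥ -ε for all y ∈ X) satisfies f(x') ≤ f(x) + ε/λ. -/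
open scoped RealInnerProductSpace

/-- Quasar-convexity: the global minimizer is a Minty VI solution for `∇f`,
and any ε-SVI solution is an ε/λ-approximate global minimum. -/
theorem quasar_convex_minty_and_value {d : ℕ} (X : Set (EuclideanSpace ℝ (Fin d)))
    (hconv : Convex ℝ X) (hcomp : IsCompact X)
    (f : EuclideanSpace ℝ (Fin d) → ℝ) (hf : Differentiable ℝ f)
    (x : EuclideanSpace ℝ (Fin d)) (hx : x ∈ X) (hmin : ∀ y ∈ X, f x ≤ f y)
    (lam : ℝ) (hlam0 : 0 < lam) (hlam1 : lam ≤ 1)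
    (hquasar : ∀ x' ∈ X, f x' + (1 / lam) * ⟪gradient f x', x - x'⟫ ≤ f x) :
    (∀ x' ∈ X, 0 ≤ ⟪gradient f x', x' - x⟫) ∧
      ∀ ε : ℝ, ∀ x' ∈ X, (∀ y ∈ X, -ε ≤ ⟪gradient f x', y - x'⟫) →
        f x' ≤ f x + ε / lam := by
  have key : ∀ a b : EuclideanSpace ℝ (Fin d),
      ⟪gradient f a, b - a⟫ = -⟪gradient f a, a - b⟫ := by
    intro a b
    rw [← inner_neg_right]; congr 1; abel
  constructor
  · intro x' hx'
    have h1 := hquasar x' hx'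
    have h2 := hmin x' hx'
    have h3 := key x' x
    have hpos : 0 < 1 / lam := by positivity
    nlinarith [h1, h2]
  · intro ε x' hx' hsvi
    have h1 := hquasar x' hx'
    have h2 := hsvi x hx
    have hpos : 0 < 1 / lam := by positivity
    have : -(ε / lam) ≤ (1 / lam) * ⟪gradient f x', x - x'⟫ := by
      rw [neg_le, ← mul_neg]
      calc (1/lam) * -⟪gradient f x', x - x'⟫ ≤ (1/lam) * ε := by
            apply mul_le_mul_of_nonneg_left _ (le_of_lt hpos); linarith
        _ = ε / lam := by ring
    linarith
end

section
/- Let F : X → ℝ^d, Q : X → ℝ with global maximizer x ∈ X, and λ > 0, and suppose the VI problem is (λ, λ-1)-smooth with respect to Q and x: ⟨F(x'), x' - x⟩ ≥ λ(Q(x) - Q(x')) for all x' ∈ X. Then x is a Minty VI solution, and any ε-SVI solution x' satisfies Q(x') ≥ Q(x) - ε/λ. -/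
open scoped RealInnerProductSpace

/-- (λ, λ-1)-smooth VIs: the global maximizer of Q is a Minty VI solution,
and any ε-SVI solution is an ε/λ-approximate global maximum of Q. -/
theorem smooth_vi_minty_and_value {d : ℕ} (X : Set (EuclideanSpace ℝ (Fin d)))
    (hconv : Convex ℝ X) (hcomp : IsCompact X)
    (F : EuclideanSpace ℝ (Fin d) → EuclideanSpace ℝ (Fin d))
    (Q : EuclideanSpace ℝ (Fin d) → ℝ)
    (x : EuclideanSpace ℝ (Fin d)) (hx : x ∈ X) (hmax : ∀ y ∈ X, Q y ≤ Q x)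
    (lam : ℝ) (hlam : 0 < lam)
    (hsmooth : ∀ x' ∈ X, lam * (Q x - Q x') ≤ ⟪F x', x' - x⟫) :
    (∀ x' ∈ X, 0 ≤ ⟪F x', x' - x⟫) ∧
      ∀ ε : ℝ, ∀ x' ∈ X, (∀ y ∈ X, -ε ≤ ⟪F x', y - x'⟫) →
        Q x - ε / lam ≤ Q x' := by
  constructor
  · intro x' hx'
    have h := hsmooth x' hx'
    have := hmax x' hx'
    nlinarith
  · intro ε x' hx' hsvi
    have h := hsmooth x' hx'
    have h2 := hsvi x hx
    have hinner : ⟪F x', x - x'⟫ = -⟪F x', x' - x⟫ := by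
      rw [← inner_neg_right]
      congr 1
      abel
    rw [hinner] at h2
    have hle : lam * (Q x - Q x') ≤ ε := by linarith
    have h3 : Q x - Q x' ≤ ε / lam := by
      rw [le_div_iff₀ hlam]; linarith [mul_comm lam (Q x - Q x')]
    linarith
end

section
/- Suppose F : X → ℝ^d is linear (F(x) = Ax for some matrix A) and satisfies ⟨F(x), x⟩ = 0 for all x ∈ X, where X is convex and compact. Then the Minty condition holds: there exists x ∈ X such that ⟨F(x'), x' - x⟩ ≥ 0 for all x' ∈ X. -/
open scoped RealInnerProductSpace

/-! A saddle point `(a, b)` of `(x, y) ↦ ⟪A y, x⟫` on `X × X`, which exists by Sion's minimax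
theorem, satisfies `⟪A y, a⟫ ≤ ⟪A b, b⟫ = 0` for every `y ∈ X`; then
`⟪A y, y - a⟫ = -⟪A y, a⟫ ≥ 0`. -/

section KyFan

variable {E : Type*} [TopologicalSpace E] [AddCommGroup E] [Module ℝ E]
  [IsTopologicalAddGroup E] [ContinuousSMul ℝ E] {X : Set E}

/-- A special case of Ky Fan's minimax inequality. -/
theorem exists_forall_le_zero_of_diag_nonpos (hne : X.Nonempty) (hconv : Convex ℝ X)
    (hcomp : IsCompact X) {f : E → E → ℝ}
    (hlsc : ∀ y ∈ X, LowerSemicontinuousOn (fun x ↦ f x y) X)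
    (hqcvx : ∀ y ∈ X, QuasiconvexOn ℝ X fun x ↦ f x y)
    (husc : ∀ x ∈ X, UpperSemicontinuousOn (f x) X)
    (hqccv : ∀ x ∈ X, QuasiconcaveOn ℝ X (f x))
    (hdiag : ∀ x ∈ X, f x x ≤ 0) :
    ∃ a ∈ X, ∀ y ∈ X, f a y ≤ 0 := by
  obtain ⟨a, ha, b, hb, hsaddle⟩ :=
    Sion.exists_isSaddlePointOn hne hconv hcomp hlsc hqcvx hconv hne hcomp husc hqccv
  exact ⟨a, ha, fun y hy ↦ (hsaddle b hb y hy).trans (hdiag b hb)⟩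

theorem exists_forall_bilin_le_zero_of_diag_nonpos [FiniteDimensional ℝ E] [T2Space E]
    (hne : X.Nonempty) (hconv : Convex ℝ X) (hcomp : IsCompact X)
    (B : E →ₗ[ℝ] E →ₗ[ℝ] ℝ) (hdiag : ∀ x ∈ X, B x x ≤ 0) :
    ∃ a ∈ X, ∀ y ∈ X, B y a ≤ 0 :=
  exists_forall_le_zero_of_diag_nonpos (f := fun x y ↦ B y x) hne hconv hcomp
    (fun y _ ↦ (B y).continuous_of_finiteDimensional.continuousOn.lowerSemicontinuousOn)
    (fun y _ ↦ ((B y).convexOn hconv).quasiconvexOn)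
    (fun x _ ↦ (B.flip x).continuous_of_finiteDimensional.continuousOn.upperSemicontinuousOn)
    (fun x _ ↦ ((B.flip x).concaveOn hconv).quasiconcaveOn)
    hdiag

end KyFan

/-- If F is linear and ⟪F x, x⟫ = 0 on X, the Minty condition holds. -/
theorem linear_zero_implies_minty {d : ℕ} (X : Set (EuclideanSpace ℝ (Fin d)))
    (hne : X.Nonempty) (hconv : Convex ℝ X) (hcomp : IsCompact X)
    (A : EuclideanSpace ℝ (Fin d) →ₗ[ℝ] EuclideanSpace ℝ (Fin d))
    (hzero : ∀ x ∈ X, ⟪A x, x⟫ = 0) :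
    ∃ x ∈ X, ∀ x' ∈ X, 0 ≤ ⟪A x', x' - x⟫ := by
  obtain ⟨a, ha, hle⟩ := exists_forall_bilin_le_zero_of_diag_nonpos hne hconv hcomp
    (innerₗ _ ∘ₗ A) fun x hx ↦ (hzero x hx).le
  refine ⟨a, ha, fun y hy ↦ ?_⟩
  have hya : ⟪A y, a⟫ ≤ 0 := hle y hy
  rw [inner_sub_right, hzero y hy]
  linarith
end

section
/- (Extra-gradient strict separation) Let X ⊆ ℝ^d be convex and compact with X ⊆ B_R(0), F : X → ℝ^d be L-Lipschitz with ‖F(x)‖ ≤ B for all x ∈ X, and suppose a ∈ X is not an ε-SVI solution, i.e., there exists y ∈ X with ⟨F(a), y - a⟩ < -ε. Let ã := Π_X(a - (1/(2L))F(a)). Then for every x ∈ X satisfying the Minty VI (⟨F(x'), x' - x⟩ ≥ 0 for all x' ∈ X), we have ⟨F(ã), a - x⟩ ≥ γ where γ := ε²L/(B + 4RL)². Moreover ⟨F(ã), a - ã⟩ ≥ γ. -/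
open scoped RealInnerProductSpace

/-- Extra-gradient strict separation: if a ∈ X is not an ε-SVI solution and
ã = Π_X(a - F(a)/(2L)), then F(ã) strictly separates a from all Minty solutions,
with margin γ = ε²L/(B+4RL)²; moreover ⟪F ã, a - ã⟫ ≥ γ. -/
theorem extragradient_strict_separation {d : ℕ} (X : Set (EuclideanSpace ℝ (Fin d)))
    (hconv : Convex ℝ X) (hcomp : IsCompact X)
    (R L B ε : ℝ) (hR : 0 < R) (hL : 0 < L) (hB : 0 < B) (hε : 0 < ε)
    (hXR : X ⊆ Metric.closedBall 0 R)
    (F : EuclideanSpace ℝ (Fin d) → EuclideanSpace ℝ (Fin d))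
    (hLip : ∀ x ∈ X, ∀ y ∈ X, ‖F x - F y‖ ≤ L * ‖x - y‖)
    (hbound : ∀ x ∈ X, ‖F x‖ ≤ B)
    (a : EuclideanSpace ℝ (Fin d)) (ha : a ∈ X)
    (hnotSVI : ∃ y ∈ X, ⟪F a, y - a⟫ < -ε)
    (atil : EuclideanSpace ℝ (Fin d)) (hatil : atil ∈ X)
    (hproj : ∀ y ∈ X, ⟪(a - (1 / (2 * L)) • F a) - atil, y - atil⟫ ≤ 0) :
    (∀ x ∈ X, (∀ x' ∈ X, 0 ≤ ⟪F x', x' - x⟫) →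
        ε ^ 2 * L / (B + 4 * R * L) ^ 2 ≤ ⟪F atil, a - x⟫) ∧
      ε ^ 2 * L / (B + 4 * R * L) ^ 2 ≤ ⟪F atil, a - atil⟫ := by
  obtain ⟨y, hy, hyε⟩ := hnotSVI
  set t : ℝ := ‖a - atil‖ with htdef
  have ht0 : 0 ≤ t := norm_nonneg _
  have expand : ∀ z : EuclideanSpace ℝ (Fin d),
      ⟪(a - (1 / (2 * L)) • F a) - atil, z⟫
        = ⟪a - atil, z⟫ - (1 / (2 * L)) * ⟪F a, z⟫ := by
    intro z
    rw [sub_right_comm, inner_sub_left, real_inner_smul_left]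
  have hLpos : (0:ℝ) < 2 * L := by positivity
  -- projection inequality at y, multiplied by 2L
  have hp_y' : 2 * L * ⟪a - atil, y - atil⟫ ≤ ⟪F a, y - atil⟫ := by
    have h := hproj y hy
    rw [expand] at h
    have h2 : ⟪a - atil, y - atil⟫ ≤ (1 / (2 * L)) * ⟪F a, y - atil⟫ := by linarith
    calc 2 * L * ⟪a - atil, y - atil⟫
        ≤ 2 * L * ((1 / (2 * L)) * ⟪F a, y - atil⟫) :=
          mul_le_mul_of_nonneg_left h2 (by positivity)
      _ = ⟪F a, y - atil⟫ := by field_simp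
  -- projection inequality at a, multiplied by 2L
  have hp_a' : 2 * L * t ^ 2 ≤ ⟪F a, a - atil⟫ := by
    have h := hproj a ha
    rw [expand] at h
    rw [real_inner_self_eq_norm_sq] at h
    have h2 : t ^ 2 ≤ (1 / (2 * L)) * ⟪F a, a - atil⟫ := by
      rw [htdef]; linarith
    calc 2 * L * t ^ 2 ≤ 2 * L * ((1 / (2 * L)) * ⟪F a, a - atil⟫) :=
          mul_le_mul_of_nonneg_left h2 (by positivity)
      _ = ⟪F a, a - atil⟫ := by field_simp
  -- split ⟪F a, y - atil⟫
  have hsplit : ⟪F a, y - atil⟫ = ⟪F a, y - a⟫ + ⟪F a, a - atil⟫ := by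
    rw [← inner_add_right]
    congr 1
    abel
  have hFaub : ⟪F a, a - atil⟫ ≤ B * t := by
    calc ⟪F a, a - atil⟫ ≤ ‖F a‖ * ‖a - atil‖ := real_inner_le_norm _ _
      _ ≤ B * t := mul_le_mul_of_nonneg_right (hbound a ha) ht0
  -- ‖y - atil‖ ≤ 2R
  have hyR : ‖y‖ ≤ R := by simpa [Metric.mem_closedBall, dist_zero_right] using hXR hy
  have hatilR : ‖atil‖ ≤ R := by
    simpa [Metric.mem_closedBall, dist_zero_right] using hXR hatil
  have hyat : ‖y - atil‖ ≤ 2 * R := by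
    calc ‖y - atil‖ ≤ ‖y‖ + ‖atil‖ := norm_sub_le _ _
      _ ≤ 2 * R := by linarith
  have hlow : -(t * (2 * R)) ≤ ⟪a - atil, y - atil⟫ := by
    have h1 : |⟪a - atil, y - atil⟫| ≤ ‖a - atil‖ * ‖y - atil‖ :=
      abs_real_inner_le_norm _ _
    have h2 : ‖a - atil‖ * ‖y - atil‖ ≤ t * (2 * R) :=
      mul_le_mul_of_nonneg_left hyat ht0
    have := neg_abs_le ⟪a - atil, y - atil⟫
    linarith
  -- lower bound on t
  have heps : ε ≤ (B + 4 * R * L) * t := by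
    have hmul : 2 * L * (-(t * (2 * R))) ≤ 2 * L * ⟪a - atil, y - atil⟫ :=
      mul_le_mul_of_nonneg_left hlow (by positivity)
    rw [hsplit] at hp_y'
    nlinarith
  -- Lipschitz cross term
  have hlip : ‖F atil - F a‖ ≤ L * t := by
    have h := hLip atil hatil a ha
    rwa [norm_sub_rev atil a, ← htdef] at h
  have hcross : -(L * t * t) ≤ ⟪F atil - F a, a - atil⟫ := by
    have h1 : |⟪F atil - F a, a - atil⟫| ≤ ‖F atil - F a‖ * ‖a - atil‖ :=
      abs_real_inner_le_norm _ _
    have h2 : ‖F atil - F a‖ * ‖a - atil‖ ≤ (L * t) * t :=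
      mul_le_mul_of_nonneg_right hlip ht0
    have := neg_abs_le ⟪F atil - F a, a - atil⟫
    nlinarith
  have hsum : ⟪F atil, a - atil⟫ = ⟪F a, a - atil⟫ + ⟪F atil - F a, a - atil⟫ := by
    rw [inner_sub_left]; ring
  have hkey : L * t ^ 2 ≤ ⟪F atil, a - atil⟫ := by
    rw [hsum]; nlinarith
  have hD : (0:ℝ) < B + 4 * R * L := by positivity
  have hγ : ε ^ 2 * L / (B + 4 * R * L) ^ 2 ≤ L * t ^ 2 := by
    rw [div_le_iff₀ (by positivity)]
    have hεt : ε * ε ≤ ((B + 4 * R * L) * t) * ((B + 4 * R * L) * t) :=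
      mul_le_mul heps heps hε.le (by positivity)
    nlinarith
  have hmain : ε ^ 2 * L / (B + 4 * R * L) ^ 2 ≤ ⟪F atil, a - atil⟫ :=
    le_trans hγ hkey
  refine ⟨fun x hx hM => ?_, hmain⟩
  have hMx : 0 ≤ ⟪F atil, atil - x⟫ := hM atil hatil
  have hdec : ⟪F atil, a - x⟫ = ⟪F atil, a - atil⟫ + ⟪F atil, atil - x⟫ := by
    rw [← inner_add_right]
    congr 1
    abel
  rw [hdec]
  linarith
end

section
/- If a ∈ X is not an ε-SVI solution (∃ x ∈ X with ⟨F(a), x - a⟩ < -ε), F is bounded by B on X, X ⊆ B_R(0), and ã := Π_X(a - ηF(a)) with η > 0, then ‖a - ã‖ ≥ ε/(B + 2R/η). In particular, for η = 1/(2L), ‖a - ã‖ ≥ ε/(B + 4LR). -/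
open scoped RealInnerProductSpace

/-- If a ∈ X is not an ε-SVI solution, the extra-gradient step ã = Π_X(a - ηF(a))
moves by at least ε/(B + 2R/η). -/
theorem extragradient_step_length {d : ℕ} (X : Set (EuclideanSpace ℝ (Fin d)))
    (hconv : Convex ℝ X) (hcomp : IsCompact X)
    (R B ε η : ℝ) (hR : 0 < R) (hB : 0 < B) (hε : 0 < ε) (hη : 0 < η)
    (hXR : X ⊆ Metric.closedBall 0 R)
    (F : EuclideanSpace ℝ (Fin d) → EuclideanSpace ℝ (Fin d))
    (hbound : ∀ x ∈ X, ‖F x‖ ≤ B)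
    (a : EuclideanSpace ℝ (Fin d)) (ha : a ∈ X)
    (hnotSVI : ∃ x ∈ X, ⟪F a, x - a⟫ < -ε)
    (atil : EuclideanSpace ℝ (Fin d)) (hatil : atil ∈ X)
    (hproj : ∀ y ∈ X, ⟪(a - η • F a) - atil, y - atil⟫ ≤ 0) :
    ε / (B + 2 * R / η) ≤ ‖a - atil‖ := by
  obtain ⟨x, hx, hxlt⟩ := hnotSVI
  have hden : 0 < B + 2 * R / η := by positivity
  rw [div_le_iff₀ hden]
  -- projection inequality
  have hp := hproj x hx
  have hexp : ⟪(a - η • F a) - atil, x - atil⟫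
      = ⟪a - atil, x - atil⟫ - η * ⟪F a, x - atil⟫ := by
    have : (a - η • F a) - atil = (a - atil) - η • F a := by abel
    rw [this, inner_sub_left, real_inner_smul_left]
  have h1 : ⟪a - atil, x - atil⟫ ≤ η * ⟪F a, x - atil⟫ := by linarith [hexp ▸ hp]
  have h2 : -(‖a - atil‖ * ‖x - atil‖) ≤ ⟪a - atil, x - atil⟫ :=
    neg_le_of_abs_le (abs_real_inner_le_norm _ _)
  -- bound on ‖F a‖ term
  have hFa : ‖F a‖ ≤ B := hbound a ha
  have h3 : -⟪F a, atil - a⟫ ≤ B * ‖a - atil‖ := by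
    have := abs_real_inner_le_norm (F a) (atil - a)
    have hnorm : ‖atil - a‖ = ‖a - atil‖ := norm_sub_rev _ _
    have hFB : ‖F a‖ * ‖atil - a‖ ≤ B * ‖a - atil‖ := by
      rw [hnorm]; exact mul_le_mul_of_nonneg_right hFa (norm_nonneg _)
    nlinarith [neg_le_of_abs_le this]
  -- bound ‖x - atil‖ ≤ 2R
  have hxR : ‖x‖ ≤ R := by simpa using hXR hx
  have hatilR : ‖atil‖ ≤ R := by simpa using hXR hatil
  have h2R : ‖x - atil‖ ≤ 2 * R := by
    calc ‖x - atil‖ ≤ ‖x‖ + ‖atil‖ := norm_sub_le _ _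
      _ ≤ 2 * R := by linarith
  -- split inner product
  have hsplit : ⟪F a, x - a⟫ = ⟪F a, x - atil⟫ + ⟪F a, atil - a⟫ := by
    rw [← inner_add_right]; congr 1; abel
  -- from h1 and h2: -η⟪F a, x - atil⟫ ≤ ‖a - atil‖ * ‖x - atil‖
  have h4 : -(η * ⟪F a, x - atil⟫) ≤ ‖a - atil‖ * ‖x - atil‖ := by linarith
  have h5 : ε < -⟪F a, x - atil⟫ - ⟪F a, atil - a⟫ := by
    rw [hsplit] at hxlt; linarith
  have h6 : -⟪F a, x - atil⟫ ≤ ‖a - atil‖ * ‖x - atil‖ / η := by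
    rw [le_div_iff₀ hη]; nlinarith
  have hnn : (0:ℝ) ≤ ‖a - atil‖ := norm_nonneg _
  have h7 : ‖a - atil‖ * ‖x - atil‖ ≤ ‖a - atil‖ * (2 * R) :=
    mul_le_mul_of_nonneg_left h2R hnn
  have h8 : ‖a - atil‖ * ‖x - atil‖ / η ≤ ‖a - atil‖ * (2 * R) / η := by
    apply div_le_div_of_nonneg_right h7 hη.le
  have : ε ≤ ‖a - atil‖ * (2 * R) / η + B * ‖a - atil‖ := by linarith
  have heq : ‖a - atil‖ * (2 * R) / η + B * ‖a - atil‖ = ‖a - atil‖ * (B + 2 * R / η) := by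
    field_simp; ring
  linarith [heq ▸ this]
end

section
/- Let 0 < ε ≤ 1/10, α ∈ [-ε, 1-3ε], and define F_{ε,α} : [0,1] → ℝ by F_{ε,α}(x) = φ_ε'(x - α) if ε < x - α < 3ε and 0 otherwise, where φ_ε(y) = (y-ε)²(y-3ε)²(y²(y²-8ε²)-1). Then the point x = α + 2ε is a Minty VI solution: F_{ε,α}(x')·(x' - (α+2ε)) ≥ 0 for all x' ∈ [0,1]. -/
/-- The function φ_ε(x) = (x-ε)²(x-3ε)²(x²(x²-8ε²)-1). -/
noncomputable def phi (ε : ℝ) : ℝ → ℝ :=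
  fun x => (x - ε) ^ 2 * (x - 3 * ε) ^ 2 * (x ^ 2 * (x ^ 2 - 8 * ε ^ 2) - 1)

/-- The mapping F_{ε,α} : [0,1] → ℝ, equal to φ_ε'(x - α) on (α+ε, α+3ε) and 0 elsewhere. -/
noncomputable def Fea (ε α : ℝ) (x : ℝ) : ℝ :=
  if ε < x - α ∧ x - α < 3 * ε then deriv (phi ε) (x - α) else 0

lemma phi_hasDerivAt (ε y : ℝ) :
    HasDerivAt (phi ε)
      (4 * (y - ε) * (y - 2 * ε) * (y - 3 * ε) * (y ^ 2 * (y ^ 2 - 8 * ε ^ 2) - 1)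
        + (y - ε) ^ 2 * (y - 3 * ε) ^ 2 * (4 * y ^ 3 - 16 * ε ^ 2 * y)) y := by
  have h : HasDerivAt (phi ε)
      (((2 * (y - ε) ^ 1 * 1) * (y - 3 * ε) ^ 2 +
          (y - ε) ^ 2 * (2 * (y - 3 * ε) ^ 1 * 1)) *
        (y ^ 2 * (y ^ 2 - 8 * ε ^ 2) - 1) +
        ((y - ε) ^ 2 * (y - 3 * ε) ^ 2) *
          ((2 * y ^ 1 * 1) * (y ^ 2 - 8 * ε ^ 2) + y ^ 2 * (2 * y ^ 1 * 1))) y := by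
    exact ((((hasDerivAt_id y).sub_const ε).pow 2).mul
      (((hasDerivAt_id y).sub_const (3 * ε)).pow 2)).mul
      ((((hasDerivAt_id y).pow 2).mul (((hasDerivAt_id y).pow 2).sub_const (8 * ε ^ 2))).sub_const 1)
  convert h using 1
  ring

/-- The point α + 2ε is a Minty VI solution of VI([0,1], F_{ε,α}). -/
theorem Fea_minty_solution (ε α : ℝ) (hε0 : 0 < ε) (hε1 : ε ≤ 1 / 10)
    (hα1 : -ε ≤ α) (hα2 : α ≤ 1 - 3 * ε) :
    ∀ x' ∈ Set.Icc (0 : ℝ) 1, 0 ≤ Fea ε α x' * (x' - (α + 2 * ε)) := by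
  intro x' _
  unfold Fea
  split_ifs with h
  · obtain ⟨h1, h2⟩ := h
    set y := x' - α with hy
    clear_value y
    have hd := (phi_hasDerivAt ε y).deriv
    rw [hd]
    have hxy : x' - (α + 2 * ε) = y - 2 * ε := by rw [hy]; ring
    rw [hxy]
    have hy0 : 0 < y := lt_trans hε0 h1
    have hy3 : y ≤ 3 / 10 := by linarith
    have hy2 : y ^ 2 ≤ 9 / 100 := by nlinarith
    have hg : 0 ≤ 1 - y ^ 2 * (y ^ 2 - 8 * ε ^ 2) := by
      have h4 : y ^ 2 * (y ^ 2 - 8 * ε ^ 2) ≤ y ^ 2 * y ^ 2 := by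
        nlinarith [mul_nonneg (sq_nonneg y) (sq_nonneg ε)]
      have h5 : y ^ 2 * y ^ 2 ≤ 9 / 100 * (9 / 100) := by
        nlinarith [sq_nonneg y]
      linarith
    have t1 : 0 ≤ 4 * (y - ε) * (3 * ε - y) * (y - 2 * ε) ^ 2 *
        (1 - y ^ 2 * (y ^ 2 - 8 * ε ^ 2)) := by
      have := mul_nonneg (mul_nonneg (mul_nonneg
        (by linarith : (0:ℝ) ≤ 4 * (y - ε)) (by linarith : (0:ℝ) ≤ 3 * ε - y))
        (sq_nonneg (y - 2 * ε))) hg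
      linarith [this]
    have t2 : 0 ≤ (y - ε) ^ 2 * (y - 3 * ε) ^ 2 * (y - 2 * ε) ^ 2 * (4 * y * (y + 2 * ε)) := by
      have h4 : (0:ℝ) ≤ 4 * y * (y + 2 * ε) := by positivity
      positivity
    have heq : (4 * (y - ε) * (y - 2 * ε) * (y - 3 * ε) * (y ^ 2 * (y ^ 2 - 8 * ε ^ 2) - 1)
        + (y - ε) ^ 2 * (y - 3 * ε) ^ 2 * (4 * y ^ 3 - 16 * ε ^ 2 * y)) * (y - 2 * ε)
        = 4 * (y - ε) * (3 * ε - y) * (y - 2 * ε) ^ 2 * (1 - y ^ 2 * (y ^ 2 - 8 * ε ^ 2))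
          + (y - ε) ^ 2 * (y - 3 * ε) ^ 2 * (y - 2 * ε) ^ 2 * (4 * y * (y + 2 * ε)) := by
      ring
    rw [heq]
    exact add_nonneg t1 t2
  · simp
end

section
/- (Two-player weighted strict-EVI implies strict CCE) Let μ be a distribution over points z = (λ₁, λ₂, λ₁x₁, λ₂x₂) in P_α (with λ₁+λ₂=1, λᵢ ≥ α, xᵢ ∈ X_i), and let G be the game operator with ⟨G(z), z - z'⟩ = λ₁'⟨∇_{x₁}u₁(x₁,x₂), x₁ - x₁'⟩ + λ₂'⟨∇_{x₂}u₂(x₁,x₂), x₂ - x₂'⟩ for z' = (λ₁', λ₂', λ₁'x₁', λ₂'x₂'). If ‖∇_{x_i}u_i‖ ≤ B, X_i ⊆ B_R(0), 0 < α < 1, and μ is a 3αBR-strict EVI solution (E_{z∼μ}⟨G(z), z - z'⟩ ≤ -3αBR for all z' ∈ P_α), then μ is an αBR-strict CCE: for all x₁' ∈ X₁, E_μ⟨∇_{x₁}u₁(x₁,x₂), x₁' - x₁⟩ ≤ -αBR, and symmetrically for player 2. -/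
open scoped RealInnerProductSpace

lemma inner_lower_bound_aux {d : ℕ} (g y x : EuclideanSpace ℝ (Fin d)) (B R : ℝ)
    (hg : ‖g‖ ≤ B) (hy : ‖y‖ ≤ R) (hx : ‖x‖ ≤ R) (hB : 0 ≤ B) :
    -(2 * B * R) ≤ ⟪g, y - x⟫ := by
  have h1 : |⟪g, y - x⟫| ≤ ‖g‖ * ‖y - x‖ := abs_real_inner_le_norm g (y - x)
  have h2 : ‖y - x‖ ≤ 2 * R := by
    calc ‖y - x‖ ≤ ‖y‖ + ‖x‖ := norm_sub_le y x
    _ ≤ 2 * R := by linarith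
  have h3 : ‖g‖ * ‖y - x‖ ≤ B * (2 * R) :=
    mul_le_mul hg h2 (norm_nonneg _) hB
  have := neg_abs_le ⟪g, y - x⟫
  nlinarith


/-- In a two-player concave game, a 3αBR-strict EVI solution (a finitely supported
distribution over the lifted set P_α) induces an αBR-strict CCE: each player's
expected deviation benefit is at most -αBR. -/
theorem two_player_strict_evi_implies_strict_cce
    {d1 d2 : ℕ}
    (X1 : Set (EuclideanSpace ℝ (Fin d1))) (X2 : Set (EuclideanSpace ℝ (Fin d2)))
    (hX1 : Convex ℝ X1) (hX2 : Convex ℝ X2)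
    (hc1 : IsCompact X1) (hc2 : IsCompact X2)
    (hne1 : X1.Nonempty) (hne2 : X2.Nonempty)
    (R B α : ℝ) (hR : 0 < R) (hB : 0 < B) (hα0 : 0 < α) (hα1 : α < 1)
    (hXR1 : X1 ⊆ Metric.closedBall 0 R) (hXR2 : X2 ⊆ Metric.closedBall 0 R)
    -- g1 = ∇_{x1} u1 and g2 = ∇_{x2} u2, with gradient norms bounded by B
    (g1 : EuclideanSpace ℝ (Fin d1) → EuclideanSpace ℝ (Fin d2) → EuclideanSpace ℝ (Fin d1))
    (g2 : EuclideanSpace ℝ (Fin d1) → EuclideanSpace ℝ (Fin d2) → EuclideanSpace ℝ (Fin d2))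
    (hg1 : ∀ x1 ∈ X1, ∀ x2 ∈ X2, ‖g1 x1 x2‖ ≤ B)
    (hg2 : ∀ x1 ∈ X1, ∀ x2 ∈ X2, ‖g2 x1 x2‖ ≤ B)
    -- μ: finitely supported distribution over points (λ₁, λ₂, λ₁x₁, λ₂x₂) ∈ P_α
    (n : ℕ) (w : Fin n → ℝ) (hw : ∀ i, 0 ≤ w i) (hwsum : ∑ i, w i = 1)
    (x1 : Fin n → EuclideanSpace ℝ (Fin d1)) (x2 : Fin n → EuclideanSpace ℝ (Fin d2))
    (l1 l2 : Fin n → ℝ)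
    (hx1 : ∀ i, x1 i ∈ X1) (hx2 : ∀ i, x2 i ∈ X2)
    (hl : ∀ i, l1 i + l2 i = 1) (hl1 : ∀ i, α ≤ l1 i) (hl2 : ∀ i, α ≤ l2 i)
    -- μ is a 3αBR-strict EVI solution:
    -- E_{z∼μ} ⟪G(z), z - z'⟫ = E_{z∼μ} [λ₁'⟪∇u₁, x₁' - x₁⟫ + λ₂'⟪∇u₂, x₂' - x₂⟫] ≤ -3αBR
    (hEVI : ∀ l1' l2' : ℝ, α ≤ l1' → α ≤ l2' → l1' + l2' = 1 →
      ∀ y1 ∈ X1, ∀ y2 ∈ X2,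
        ∑ i, w i * (l1' * ⟪g1 (x1 i) (x2 i), y1 - x1 i⟫ +
          l2' * ⟪g2 (x1 i) (x2 i), y2 - x2 i⟫) ≤ -(3 * α * B * R)) :
    -- μ is an αBR-strict CCE
    (∀ y1 ∈ X1, ∑ i, w i * ⟪g1 (x1 i) (x2 i), y1 - x1 i⟫ ≤ -(α * B * R)) ∧
      (∀ y2 ∈ X2, ∑ i, w i * ⟪g2 (x1 i) (x2 i), y2 - x2 i⟫ ≤ -(α * B * R)) := by
  
  classical
  have hn : 0 < n := by
    rcases Nat.eq_zero_or_pos n with h | h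
    · exfalso; subst h; simp at hwsum
    · exact h
  have hα2 : 2 * α ≤ 1 := by
    have i : Fin n := ⟨0, hn⟩
    have := hl i; have := hl1 i; have := hl2 i; linarith
  have hα1' : α ≤ 1 - α := by linarith
  have hαBR : 0 < α * B * R := by positivity
  -- player 1
  have P1 : ∀ y1 ∈ X1, ∑ i, w i * ⟪g1 (x1 i) (x2 i), y1 - x1 i⟫ ≤ -(α * B * R) := by
    intro y1 hy1
    obtain ⟨c2, hc2⟩ := hne2
    have h := hEVI (1 - α) α hα1' le_rfl (by ring) y1 hy1 c2 hc2
    have hsplit : ∑ i, w i * ((1 - α) * ⟪g1 (x1 i) (x2 i), y1 - x1 i⟫ +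
        α * ⟪g2 (x1 i) (x2 i), c2 - x2 i⟫)
      = (1 - α) * ∑ i, w i * ⟪g1 (x1 i) (x2 i), y1 - x1 i⟫ +
        α * ∑ i, w i * ⟪g2 (x1 i) (x2 i), c2 - x2 i⟫ := by
      rw [Finset.mul_sum, Finset.mul_sum, ← Finset.sum_add_distrib]
      exact Finset.sum_congr rfl fun i _ => by ring
    have hbd : -(2 * B * R) ≤ ∑ i, w i * ⟪g2 (x1 i) (x2 i), c2 - x2 i⟫ := by
      calc -(2 * B * R) = ∑ i, w i * -(2 * B * R) := by
            rw [← Finset.sum_mul, hwsum, one_mul]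
          _ ≤ _ := by
            apply Finset.sum_le_sum
            intro i _
            apply mul_le_mul_of_nonneg_left _ (hw i)
            exact inner_lower_bound_aux _ _ _ B R (hg2 _ (hx1 i) _ (hx2 i))
              (by simpa using hXR2 hc2) (by simpa using hXR2 (hx2 i)) hB.le
    rw [hsplit] at h
    nlinarith [h, hbd]
  refine ⟨P1, ?_⟩
  intro y2 hy2
  obtain ⟨c1, hc1⟩ := hne1
  have h := hEVI α (1 - α) le_rfl hα1' (by ring) c1 hc1 y2 hy2
  have hsplit : ∑ i, w i * (α * ⟪g1 (x1 i) (x2 i), c1 - x1 i⟫ +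
      (1 - α) * ⟪g2 (x1 i) (x2 i), y2 - x2 i⟫)
    = α * ∑ i, w i * ⟪g1 (x1 i) (x2 i), c1 - x1 i⟫ +
      (1 - α) * ∑ i, w i * ⟪g2 (x1 i) (x2 i), y2 - x2 i⟫ := by
    rw [Finset.mul_sum, Finset.mul_sum, ← Finset.sum_add_distrib]
    exact Finset.sum_congr rfl fun i _ => by ring
  have hbd : -(2 * B * R) ≤ ∑ i, w i * ⟪g1 (x1 i) (x2 i), c1 - x1 i⟫ := by
    calc -(2 * B * R) = ∑ i, w i * -(2 * B * R) := by
          rw [← Finset.sum_mul, hwsum, one_mul]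
        _ ≤ _ := by
          apply Finset.sum_le_sum
          intro i _
          apply mul_le_mul_of_nonneg_left _ (hw i)
          exact inner_lower_bound_aux _ _ _ B R (hg1 _ (hx1 i) _ (hx2 i))
            (by simpa using hXR1 hc1) (by simpa using hXR1 (hx1 i)) hB.le
  rw [hsplit] at h
  nlinarith [h, hbd]
end
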